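/- Let c and k be positive integers with k - 2 ≥ log₂(c+1) (equivalently 2^{k-2} ≥ c+1), and let G be a finitely generated nilpotent group of nilpotency class at most c. Set K = G^{2^k}. Then for every normal subgroup N of G one has [N, K] ≤ N⁴. In particular K is powerful, i.e. [K,K] ≤ K⁴. -/

import Mathlib

/-!
Modulo `N⁴` the normal subgroup `N` has exponent 4, so it suffices to show that then every
`x ^ 2 ^ k` centralises `N`. Filter `N` by `N_i = N ⊓ γ_i(G)` and put `Φ(m, j) = N_m² N_j`.
For `j ≤ 2m + 1`, `Φ(m, j)` is abelian modulo `Φ(j, 2j + 1)` and squaring maps it into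
`Φ(j, 2j + 1)`, because `(e²)² = e⁴ = 1` for `e ∈ N`. Both facts rest on
`[N_m², N_m²] ≤ Φ(2m + 1, 4m + 3)`, which follows from the same statement at `2m + 1`, hence by
downward induction from the top of the filtration. Writing `x ^ 2 ^ (t + 2)` as the square of
`y = x ^ 2 ^ (t + 1)`, induction on `t` gives `[N_p, x ^ 2 ^ (t + 1)] ≤ Φ(p + 2 ^ t, p + 2 ^ (t + 1))`,
and for `p = 0` the right side is trivial once `c ≤ 2 ^ t`.
-/

def subPow {G : Type*} [Group G] (N : Subgroup G) (m : ℕ) : Subgroup G :=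
  Subgroup.closure {x : G | ∃ n ∈ N, n ^ m = x}

open Subgroup
open scoped commutatorElement

section Identities

variable {G : Type*} [Group G]

theorem commutatorElement_sq_left (e v : G) : ⁅e ^ 2, v⁆ = ⁅⁅e, v⁆, e⁆⁻¹ * ⁅e, v⁆ ^ 2 := by
  rw [pow_two ⁅e, v⁆, ← zpow_ofNat]; simp only [commutatorElement_def]; group

theorem commutatorElement_sq_right (a y : G) : ⁅a, y ^ 2⁆ = ⁅a, y⁆ ^ 2 * ⁅⁅a, y⁆⁻¹, y⁆ := by
  simp only [commutatorElement_def, pow_two]; group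

theorem mul_sq_eq_sq_mul_commutatorElement_mul_sq (u v : G) :
    (u * v) ^ 2 = u ^ 2 * ⁅u⁻¹, v⁆ * v ^ 2 := by
  simp only [commutatorElement_def, pow_two]; group

end Identities

namespace Subgroup

variable {G : Type*} [Group G]

theorem commutator_closure_le {s t : Set G} {T : Subgroup G} [T.Normal]
    (h : ∀ a ∈ s, ∀ b ∈ t, ⁅a, b⁆ ∈ T) : ⁅closure s, closure t⁆ ≤ T := by
  rw [← QuotientGroup.ker_mk' T, ← map_eq_bot_iff, map_commutator, MonoidHom.map_closure,
    MonoidHom.map_closure, commutator_eq_bot_iff_le_centralizer, centralizer_closure, closure_le]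
  rintro _ ⟨a, ha, rfl⟩ _ ⟨b, hb, rfl⟩
  rw [← commutatorElement_eq_one_iff_mul_comm, ← map_commutatorElement, ← MonoidHom.mem_ker,
    QuotientGroup.ker_mk', ← commutatorElement_inv]
  exact inv_mem (h a ha b hb)

theorem commutator_commutator_le_of_rotate {A B C T : Subgroup G} [T.Normal]
    (h₁ : ⁅⁅B, C⁆, A⁆ ≤ T) (h₂ : ⁅⁅C, A⁆, B⁆ ≤ T) : ⁅⁅A, B⁆, C⁆ ≤ T := by
  have hquot : ∀ X Y Z : Subgroup G, ⁅⁅X, Y⁆, Z⁆ ≤ T ↔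
      ⁅⁅X.map (QuotientGroup.mk' T), Y.map (QuotientGroup.mk' T)⁆,
        Z.map (QuotientGroup.mk' T)⁆ = ⊥ := fun X Y Z => by
    rw [← map_commutator, ← map_commutator, map_eq_bot_iff, QuotientGroup.ker_mk']
  rw [hquot] at *
  exact commutator_commutator_eq_bot_of_rotate h₁ h₂

theorem commutator_lowerCentralSeries_le (a b : ℕ) :
    ⁅(⊤ : Subgroup G).lowerCentralSeries a, (⊤ : Subgroup G).lowerCentralSeries b⁆ ≤
      (⊤ : Subgroup G).lowerCentralSeries (a + b + 1) := by
  induction b generalizing a with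
  | zero => rfl
  | succ b ih =>
    rw [lowerCentralSeries_succ, commutator_comm]
    apply commutator_commutator_le_of_rotate
    · rw [commutator_comm ⊤, ← lowerCentralSeries_succ]
      exact (ih (a + 1)).trans_eq (by congr 1; omega)
    · exact (commutator_mono (ih a) le_top).trans_eq (by rw [← lowerCentralSeries_succ]; congr 1)

end Subgroup

section SubPow

variable {G : Type*} [Group G]

theorem pow_mem_subPow {N : Subgroup G} {g : G} (hg : g ∈ N) (m : ℕ) : g ^ m ∈ subPow N m :=
  subset_closure ⟨g, hg, rfl⟩

theorem subPow_le (N : Subgroup G) (m : ℕ) : subPow N m ≤ N :=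
  closure_le _ |>.mpr <| by rintro _ ⟨n, hn, rfl⟩; exact N.pow_mem hn m

theorem subPow_mono {N N' : Subgroup G} (h : N ≤ N') (m : ℕ) : subPow N m ≤ subPow N' m :=
  closure_mono <| by rintro _ ⟨n, hn, rfl⟩; exact ⟨n, h hn, rfl⟩

instance subPow_normal (N : Subgroup G) [hN : N.Normal] (m : ℕ) : (subPow N m).Normal := by
  refine ⟨fun x hx g => ?_⟩
  have hconj : (subPow N m).map (MulAut.conj g).toMonoidHom ≤ subPow N m := by
    rw [subPow, MonoidHom.map_closure, closure_le]
    rintro _ ⟨_, ⟨n, hn, rfl⟩, rfl⟩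
    exact subset_closure ⟨g * n * g⁻¹, hN.conj_mem n hn g, by simp [conj_pow]⟩
  exact hconj ⟨x, hx, rfl⟩

end SubPow

namespace Subgroup

variable {G : Type*} [Group G] (N : Subgroup G)

def lcsInf (i : ℕ) : Subgroup G := N ⊓ (⊤ : Subgroup G).lowerCentralSeries i

def sqLayer (m j : ℕ) : Subgroup G := subPow (N.lcsInf m) 2 ⊔ N.lcsInf j

variable {N}

instance lcsInf_normal [N.Normal] (i : ℕ) : (N.lcsInf i).Normal := by
  unfold lcsInf; infer_instance

instance sqLayer_normal [N.Normal] (m j : ℕ) : (N.sqLayer m j).Normal := by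
  unfold sqLayer; infer_instance

theorem lcsInf_zero : N.lcsInf 0 = N := inf_top_eq N

theorem lcsInf_le_self (i : ℕ) : N.lcsInf i ≤ N := inf_le_left

theorem lcsInf_antitone : Antitone N.lcsInf := fun _ _ h =>
  inf_le_inf_left N ((⊤ : Subgroup G).lowerCentralSeries_antitone h)

theorem lcsInf_eq_bot {c : ℕ} (hc : (⊤ : Subgroup G).lowerCentralSeries c = ⊥) :
    N.lcsInf c = ⊥ := by
  rw [lcsInf, hc, inf_bot_eq]

theorem sqLayer_eq_closure (m j : ℕ) :
    N.sqLayer m j = closure ({x | ∃ e ∈ N.lcsInf m, e ^ 2 = x} ∪ N.lcsInf j) := by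
  rw [closure_union, closure_eq]; rfl

theorem sqLayer_anti {m m' j j' : ℕ} (hm : m ≤ m') (hj : j ≤ j') :
    N.sqLayer m' j' ≤ N.sqLayer m j :=
  sup_le_sup (subPow_mono (lcsInf_antitone hm) 2) (lcsInf_antitone hj)

theorem sq_mem_sqLayer {m : ℕ} {e : G} (he : e ∈ N.lcsInf m) (j : ℕ) : e ^ 2 ∈ N.sqLayer m j :=
  mem_sup_left (pow_mem_subPow he 2)

theorem mem_sqLayer_of_mem_lcsInf {j : ℕ} {z : G} (hz : z ∈ N.lcsInf j) (m : ℕ) :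
    z ∈ N.sqLayer m j :=
  mem_sup_right hz

variable [N.Normal]

theorem commutatorElement_mem_lcsInf {a b : ℕ} {x y : G} (hx : x ∈ N.lcsInf a)
    (hy : y ∈ N.lcsInf b) : ⁅x, y⁆ ∈ N.lcsInf (a + b + 1) :=
  ⟨commutator_le_left N N (commutator_mem_commutator hx.1 hy.1),
    commutator_lowerCentralSeries_le a b (commutator_mem_commutator hx.2 hy.2)⟩

theorem commutatorElement_mem_lcsInf_succ {a : ℕ} {x : G} (hx : x ∈ N.lcsInf a) (y : G) :
    ⁅x, y⁆ ∈ N.lcsInf (a + 1) :=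
  ⟨commutator_le_left N ⊤ (commutator_mem_commutator hx.1 (mem_top y)),
    commutator_mem_commutator hx.2 (mem_top y)⟩

theorem commutator_sqLayer_lcsInf_le {m j : ℕ} (hj : j ≤ 2 * m + 1) (b : ℕ) :
    ⁅N.sqLayer m j, N.lcsInf b⁆ ≤ N.sqLayer (m + b + 1) (j + b + 1) := by
  rw [sqLayer_eq_closure, ← closure_eq (N.lcsInf b)]
  refine commutator_closure_le ?_
  rintro _ (⟨e, he, rfl⟩ | hz) v hv
  · have hev := commutatorElement_mem_lcsInf he hv
    rw [commutatorElement_sq_left]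
    refine mul_mem (inv_mem (mem_sqLayer_of_mem_lcsInf ?_ _)) (sq_mem_sqLayer hev _)
    exact lcsInf_antitone (by omega) (commutatorElement_mem_lcsInf hev he)
  · exact mem_sqLayer_of_mem_lcsInf (commutatorElement_mem_lcsInf hz hv) _

theorem commutator_sqLayer_le {m j : ℕ} (hj : j ≤ 2 * m + 1)
    (hB : ⁅subPow (N.lcsInf m) 2, subPow (N.lcsInf m) 2⁆ ≤ N.sqLayer (2 * m + 1) (4 * m + 3)) :
    ⁅N.sqLayer m j, N.sqLayer m j⁆ ≤ N.sqLayer j (2 * j + 1) := by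
  have hsq : ⁅N.sqLayer m (2 * m + 1), N.lcsInf j⁆ ≤ N.sqLayer j (2 * j + 1) :=
    (commutator_sqLayer_lcsInf_le le_rfl j).trans (sqLayer_anti (by omega) (by omega))
  rw [sqLayer_eq_closure]
  refine commutator_closure_le ?_
  rintro _ (⟨e, he, rfl⟩ | hz) _ (⟨f, hf, rfl⟩ | hz')
  · exact sqLayer_anti hj (by omega)
      (hB (commutator_mem_commutator (pow_mem_subPow he 2) (pow_mem_subPow hf 2)))
  · exact hsq (commutator_mem_commutator (sq_mem_sqLayer he _) hz')
  · rw [← commutatorElement_inv]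
    exact inv_mem (hsq (commutator_mem_commutator (sq_mem_sqLayer hf _) hz))
  · exact mem_sqLayer_of_mem_lcsInf
      (lcsInf_antitone (by omega) (commutatorElement_mem_lcsInf hz hz')) _

theorem sq_mem_sqLayer_of_mem (hexp : ∀ g ∈ N, g ^ 4 = 1) {m j : ℕ} (hj : j ≤ 2 * m + 1)
    (hB : ⁅subPow (N.lcsInf m) 2, subPow (N.lcsInf m) 2⁆ ≤ N.sqLayer (2 * m + 1) (4 * m + 3))
    {w : G} (hw : w ∈ N.sqLayer m j) : w ^ 2 ∈ N.sqLayer j (2 * j + 1) := by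
  rw [sqLayer_eq_closure] at hw
  induction hw using closure_induction with
  | mem x hx =>
    rcases hx with ⟨e, he, rfl⟩ | hz
    · rw [← pow_mul, hexp e (lcsInf_le_self m he)]
      exact one_mem _
    · exact sq_mem_sqLayer hz _
  | one => rw [one_pow]; exact one_mem _
  | mul x y hx hy px py =>
    rw [← sqLayer_eq_closure] at hx hy
    rw [mul_sq_eq_sq_mul_commutatorElement_mul_sq]
    exact mul_mem (mul_mem px (commutator_sqLayer_le hj hB
      (commutator_mem_commutator (inv_mem hx) hy))) py
  | inv x _ px => rw [inv_pow]; exact inv_mem px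

theorem commutatorElement_sq_left_mem_sqLayer (hexp : ∀ g ∈ N, g ^ 4 = 1) {m j b : ℕ}
    (hj : j ≤ 2 * m + 1)
    (hB : ⁅subPow (N.lcsInf m) 2, subPow (N.lcsInf m) 2⁆ ≤ N.sqLayer (2 * m + 1) (4 * m + 3))
    {e v : G} (he : e ∈ N.lcsInf b) (hw : ⁅e, v⁆ ∈ N.sqLayer m j) :
    ⁅e ^ 2, v⁆ ∈ N.sqLayer (min (m + b + 1) j) (min (j + b + 1) (2 * j + 1)) := by
  rw [commutatorElement_sq_left]
  refine mul_mem (inv_mem ?_) ?_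
  · exact sqLayer_anti (min_le_left _ _) (min_le_left _ _)
      (commutator_sqLayer_lcsInf_le hj b (commutator_mem_commutator hw he))
  · exact sqLayer_anti (min_le_right _ _) (min_le_right _ _)
      (sq_mem_sqLayer_of_mem hexp hj hB hw)

theorem commutator_subPow_lcsInf_le (hexp : ∀ g ∈ N, g ^ 4 = 1) {c : ℕ}
    (hc : N.lcsInf c = ⊥) (m : ℕ) :
    ⁅subPow (N.lcsInf m) 2, subPow (N.lcsInf m) 2⁆ ≤ N.sqLayer (2 * m + 1) (4 * m + 3) := by
  obtain ⟨s, hs⟩ : ∃ s, c ≤ m + s := ⟨c, by omega⟩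
  induction s generalizing m with
  | zero =>
    have hbot : subPow (N.lcsInf m) 2 = ⊥ :=
      eq_bot_iff.mpr ((subPow_le _ _).trans (hc ▸ lcsInf_antitone (by omega)))
    rw [hbot, commutator_bot_left]
    exact bot_le
  | succ s ih =>
    have hB := ih (2 * m + 1) (by omega)
    refine (commutator_mono le_rfl (closure_eq _).ge).trans (commutator_closure_le ?_)
    rintro _ ⟨e, he, rfl⟩ v hv
    have hw : ⁅e, v⁆ ∈ N.sqLayer (2 * m + 1) (3 * m + 2) := by
      rw [← commutatorElement_inv]
      exact inv_mem <| sqLayer_anti (by omega) (by omega) <|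
        commutator_sqLayer_lcsInf_le le_rfl m (commutator_mem_commutator (mem_sup_left hv) he)
    exact sqLayer_anti (by omega) (by omega)
      (commutatorElement_sq_left_mem_sqLayer hexp (by omega) hB he hw)

theorem commutatorElement_pow_two_pow_mem_sqLayer (hexp : ∀ g ∈ N, g ^ 4 = 1) {c : ℕ}
    (hc : N.lcsInf c = ⊥) (t : ℕ) :
    ∀ p, ∀ n ∈ N.lcsInf p, ∀ x : G,
      ⁅n, x ^ 2 ^ (t + 1)⁆ ∈ N.sqLayer (p + 2 ^ t) (p + 2 ^ (t + 1)) := by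
  induction t with
  | zero =>
    intro p n hn x
    have hnx := commutatorElement_mem_lcsInf_succ hn x
    rw [zero_add, pow_one, commutatorElement_sq_right]
    exact mul_mem (sq_mem_sqLayer hnx _)
      (mem_sqLayer_of_mem_lcsInf (commutatorElement_mem_lcsInf_succ (inv_mem hnx) x) _)
  | succ t ih =>
    intro p n hn x
    have h2 : 2 ^ (t + 1) = 2 * 2 ^ t := pow_succ' 2 t
    have h4 : 2 ^ (t + 2) = 4 * 2 ^ t := by rw [pow_add]; ring
    have hB := commutator_subPow_lcsInf_le hexp hc
    set y := x ^ 2 ^ (t + 1)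
    have hy : x ^ 2 ^ (t + 2) = y ^ 2 := by rw [← pow_mul, ← pow_succ]
    have hcomm_y : ⁅N.sqLayer (p + 2 ^ t) (p + 2 ^ (t + 1)), closure {y}⁆ ≤
        N.sqLayer (p + 2 ^ (t + 1)) (p + 2 ^ (t + 2)) := by
      rw [sqLayer_eq_closure]
      refine commutator_closure_le ?_
      rintro _ (⟨e, he, rfl⟩ | hz) _ rfl
      · exact sqLayer_anti (by omega) (by omega) <|
          commutatorElement_sq_left_mem_sqLayer hexp (by omega) (hB _) he (ih _ e he x)
      · exact sqLayer_anti (by omega) (by omega) (ih _ _ hz x)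
    have hny := ih p n hn x
    rw [hy, commutatorElement_sq_right]
    refine mul_mem ?_ (hcomm_y (commutator_mem_commutator (inv_mem hny) (subset_closure rfl)))
    exact sqLayer_anti (by omega) (by omega) (sq_mem_sqLayer_of_mem hexp (by omega) (hB _) hny)

theorem commutatorElement_pow_two_pow_eq_one (hexp : ∀ g ∈ N, g ^ 4 = 1) {t : ℕ}
    (hc : N.lcsInf (2 ^ t) = ⊥) {n : G} (hn : n ∈ N) (x : G) : ⁅n, x ^ 2 ^ (t + 1)⁆ = 1 := by
  have hvanish : ∀ i, 2 ^ t ≤ i → N.lcsInf i = ⊥ := fun i hi =>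
    eq_bot_iff.mpr (hc ▸ lcsInf_antitone hi)
  have h := commutatorElement_pow_two_pow_mem_sqLayer hexp hc t 0 n (lcsInf_zero.ge hn) x
  rw [sqLayer, hvanish _ (by omega), hvanish _ (by rw [pow_succ]; omega), sup_bot_eq] at h
  exact mem_bot.mp (subPow_le ⊥ 2 h)

end Subgroup

theorem commutator_subPow_two_pow_le {G : Type*} [Group G] {t : ℕ}
    (hγ : (⊤ : Subgroup G).lowerCentralSeries (2 ^ t) = ⊥) (N : Subgroup G) [N.Normal] :
    ⁅N, subPow ⊤ (2 ^ (t + 1))⁆ ≤ subPow N 4 := by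
  refine (commutator_mono (closure_eq N).ge le_rfl).trans (commutator_closure_le ?_)
  rintro n hn _ ⟨x, -, rfl⟩
  set π := QuotientGroup.mk' (subPow N 4)
  have hπ : Function.Surjective π := QuotientGroup.mk'_surjective _
  have : (N.map π).Normal := Normal.map inferInstance π hπ
  have hexp : ∀ g ∈ N.map π, g ^ 4 = 1 := by
    rintro _ ⟨g, hg, rfl⟩
    rw [← map_pow, ← MonoidHom.mem_ker, QuotientGroup.ker_mk']
    exact pow_mem_subPow hg 4
  have hγπ : (⊤ : Subgroup (G ⧸ subPow N 4)).lowerCentralSeries (2 ^ t) = ⊥ := by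
    rw [← map_top_of_surjective π hπ, ← map_lowerCentralSeries, hγ, Subgroup.map_bot]
  rw [← QuotientGroup.ker_mk' (subPow N 4), MonoidHom.mem_ker, map_commutatorElement, map_pow]
  exact commutatorElement_pow_two_pow_eq_one hexp (lcsInf_eq_bot hγπ) (mem_map_of_mem π hn) _

theorem commutator_with_2k_powers_le_fourth_powers_general
    (c k : ℕ) (hk : 0 < k)
    (hck : c + 1 ≤ 2 ^ (k - 2))
    {G : Type*} [Group G]
    (hnil : (⊤ : Subgroup G).lowerCentralSeries c = ⊥)
    (K : Subgroup G) (hK : K = subPow (⊤ : Subgroup G) (2 ^ k)) :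
    (∀ N : Subgroup G, N.Normal → ⁅N, K⁆ ≤ subPow N 4) ∧ ⁅K, K⁆ ≤ subPow K 4 := by
  obtain ⟨t, rfl⟩ : ∃ t, k = t + 1 := ⟨k - 1, by omega⟩
  have hct : c ≤ 2 ^ t := by
    have := Nat.pow_le_pow_right two_pos (by omega : t + 1 - 2 ≤ t)
    omega
  have hγ : (⊤ : Subgroup G).lowerCentralSeries (2 ^ t) = ⊥ :=
    eq_bot_iff.mpr (hnil ▸ Subgroup.lowerCentralSeries_antitone ⊤ hct)
  subst hK
  exact ⟨fun N _ => commutator_subPow_two_pow_le hγ N, commutator_subPow_two_pow_le hγ _⟩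

/-- Let `2^{k-2} ≥ c+1` and `G` a finitely generated nilpotent group of class at most `c`.
With `K = G^{2^k}`, for every normal subgroup `N` of `G` we have `[N,K] ≤ N⁴`;
in particular `K` is powerful: `[K,K] ≤ K⁴`. -/
theorem commutator_with_2k_powers_le_fourth_powers
    (c k : ℕ) (hc : 0 < c) (hk : 0 < k)
    (hck : c + 1 ≤ 2 ^ (k - 2))
    {G : Type*} [Group G] (hfg : Group.FG G)
    (hnil : (⊤ : Subgroup G).lowerCentralSeries c = ⊥)
    (K : Subgroup G) (hK : K = subPow (⊤ : Subgroup G) (2 ^ k)) :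
    (∀ N : Subgroup G, N.Normal → ⁅N, K⁆ ≤ subPow N 4) ∧ ⁅K, K⁆ ≤ subPow K 4 :=
  commutator_with_2k_powers_le_fourth_powers_general c k hk hck hnil K hK
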